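/- Let u₄(b,x) = 4 - b₁² - b₂² - b₃² - b₁b₂b₃b₄ - b₄² + (b₁b₂ + b₃b₄)x₁ - x₁² + (b₁b₃ + b₂b₄)x₂ - x₂² + (b₂b₃ + b₁b₄)x₃ - x₁x₂x₃ - x₃² with b = (1,0,0,0). Then the hypersurface {u₄(b,x) = 0} ⊂ ℂ³ is smooth: there is no point where u₄ and all three partial derivatives ∂u₄/∂xᵢ vanish simultaneously. -/

import Mathlib

/-!
For `b = (1,0,0,0)` the polynomial is the Markoff-type cubic `κ - x² - y² - z² - xyz` with `κ = 3`.
At a critical point Euler's relation `2f - Σ xᵢ ∂ᵢf = 2κ + xyz` forces `xyz = -2κ`, while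
multiplying the three equations `yz = -2x`, `xz = -2y`, `xy = -2z` gives `(xyz)² = -8 xyz`.
Together these leave only `κ = 0` (the cone) and `κ = 4` (the Cayley cubic) as singular members.
-/

open MvPolynomial

/-- The four-holed sphere polynomial `u₄(b, x)` with boundary traces `b = (b₁,b₂,b₃,b₄)`. -/
noncomputable def u4 (b1 b2 b3 b4 : ℂ) : MvPolynomial (Fin 3) ℂ :=
  C (4 - b1 ^ 2 - b2 ^ 2 - b3 ^ 2 - b1 * b2 * b3 * b4 - b4 ^ 2)
    + C (b1 * b2 + b3 * b4) * X 0 - X 0 ^ 2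
    + C (b1 * b3 + b2 * b4) * X 1 - X 1 ^ 2
    + C (b2 * b3 + b1 * b4) * X 2 - X 0 * X 1 * X 2 - X 2 ^ 2

namespace MvPolynomial

variable {σ R : Type*} [CommRing R]

def IsSingularPoint (f : MvPolynomial σ R) (p : σ → R) : Prop :=
  eval p f = 0 ∧ ∀ i, eval p (pderiv i f) = 0

noncomputable def markoffCubic (κ : R) : MvPolynomial (Fin 3) R :=
  C κ - X 0 ^ 2 - X 1 ^ 2 - X 2 ^ 2 - X 0 * X 1 * X 2

theorem four_mul_mul_sub_four_eq_zero_of_markoff_critical {κ a b c : R}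
    (h : κ - a ^ 2 - b ^ 2 - c ^ 2 - a * b * c = 0)
    (ha : 2 * a + b * c = 0) (hb : 2 * b + a * c = 0) (hc : 2 * c + a * b = 0) :
    4 * κ * (κ - 4) = 0 := by
  have euler : a * b * c + 2 * κ = 0 := by
    linear_combination 2 * h + a * ha + b * hb + c * hc
  have product : (a * b * c) ^ 2 + 8 * (a * b * c) = 0 := by
    linear_combination (a * c) * (a * b) * ha + (-2 * a) * (a * b) * hb
      + (-2 * a) * (-2 * b) * hc
  linear_combination product - (a * b * c - 2 * κ + 8) * euler

section markoffCubic

variable (κ : R) (p : Fin 3 → R)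

theorem eval_markoffCubic :
    eval p (markoffCubic κ) = κ - p 0 ^ 2 - p 1 ^ 2 - p 2 ^ 2 - p 0 * p 1 * p 2 := by
  simp [markoffCubic]

theorem eval_pderiv_zero_markoffCubic :
    eval p (pderiv 0 (markoffCubic κ)) = -(2 * p 0 + p 1 * p 2) := by
  simp [markoffCubic, pderiv_X]
  ring

theorem eval_pderiv_one_markoffCubic :
    eval p (pderiv 1 (markoffCubic κ)) = -(2 * p 1 + p 0 * p 2) := by
  simp [markoffCubic, pderiv_X]
  ring

theorem eval_pderiv_two_markoffCubic :
    eval p (pderiv 2 (markoffCubic κ)) = -(2 * p 2 + p 0 * p 1) := by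
  simp [markoffCubic, pderiv_X]
  ring

variable {κ p} in
theorem IsSingularPoint.four_mul_mul_sub_four_eq_zero
    (hp : (markoffCubic κ).IsSingularPoint p) : 4 * κ * (κ - 4) = 0 := by
  obtain ⟨hp, hd⟩ := hp
  have h0 := hd 0
  have h1 := hd 1
  have h2 := hd 2
  rw [eval_markoffCubic] at hp
  rw [eval_pderiv_zero_markoffCubic, neg_eq_zero] at h0
  rw [eval_pderiv_one_markoffCubic, neg_eq_zero] at h1
  rw [eval_pderiv_two_markoffCubic, neg_eq_zero] at h2
  exact four_mul_mul_sub_four_eq_zero_of_markoff_critical hp h0 h1 h2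

end markoffCubic

end MvPolynomial

theorem u4_one_zero_zero_zero : u4 1 0 0 0 = markoffCubic 3 := by
  simp only [u4, markoffCubic]
  norm_num
  ring

/-- For `b = (1,0,0,0)`, the hypersurface `{u₄(b, x) = 0} ⊂ ℂ³` is smooth: there is no
point where `u₄` and all three partial derivatives vanish simultaneously. -/
theorem stmt_12 (b1 b2 b3 b4 : ℂ) (hb : b1 = 1 ∧ b2 = 0 ∧ b3 = 0 ∧ b4 = 0) :
    ¬ ∃ p : Fin 3 → ℂ,
        eval p (u4 b1 b2 b3 b4) = 0 ∧ ∀ i : Fin 3, eval p (pderiv i (u4 b1 b2 b3 b4)) = 0 := by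
  obtain ⟨rfl, rfl, rfl, rfl⟩ := hb
  rintro ⟨p, hp⟩
  rw [u4_one_zero_zero_zero] at hp
  have := IsSingularPoint.four_mul_mul_sub_four_eq_zero hp
  norm_num at this
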